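/- arXiv:2102.08510 — 2 statements merged into one kernel-verified Lean document; each statement's English description precedes it below -/
import Mathlib

section
/- Correctness of the delegate-allocation audit assertions: if for all pairs of distinct viable candidates m, n the assertion p_m > p_n + (a_m - a_n - 1)/D holds with p the true proportions, then the reported allocation a equals the true Hamilton-method allocation a'. Equivalently (contrapositive): if the reported allocation a differs from the true Hamilton allocation a', then some pair m, n violates p_m > p_n + (a_m - a_n - 1)/D. -/
/-!
Write `e c = q c - a' c` for the error of the true allocation. Hamilton's rounding keeps every
error in `(-1, 1)`, and it never has `e m > e n + 1`: that would force `m` to be rounded down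
and `n` strictly up with the remainder of `m` exceeding that of `n`. If `a ≠ a'`, equal totals give
`m` with `a m > a' m` and `n` with `a n < a' n`, and the assertion for `(m, n)`, multiplied by `D`,
says exactly `e m > e n + 1`.
-/

open Finset

theorem Fintype.exists_lt_of_sum_eq_of_ne {ι M : Type*} [Fintype ι] [AddCommMonoid M]
    [LinearOrder M] [IsOrderedCancelAddMonoid M] {f g : ι → M}
    (hsum : ∑ i, f i = ∑ i, g i) (hne : f ≠ g) : ∃ i, f i < g i := by
  by_contra! hle
  exact hne <| funext fun i =>
    ((sum_eq_sum_iff_of_le fun j _ => hle j).mp hsum.symm i (mem_univ i)).symm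

namespace Int

variable {α : Type*} [CommRing α] [LinearOrder α] [FloorRing α] {x : α} {k : ℤ}

theorem abs_sub_lt_one_of_eq_floor_or_eq_ceil [IsStrictOrderedRing α] (h : k = ⌊x⌋ ∨ k = ⌈x⌉) :
    |x - k| < 1 := by
  rw [abs_sub_lt_iff]
  rcases h with rfl | rfl
  · exact ⟨by linarith [lt_floor_add_one x], by linarith [floor_le x]⟩
  · exact ⟨by linarith [le_ceil x], by linarith [ceil_lt_add_one x]⟩

theorem eq_floor_of_lt_of_eq_floor_or_eq_ceil (h : k = ⌊x⌋ ∨ k = ⌈x⌉) (hk : (k : α) < x) :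
    k = ⌊x⌋ :=
  h.resolve_right fun hc => (hc ▸ hk).not_ge (le_ceil x)

theorem eq_ceil_of_lt_of_eq_floor_or_eq_ceil (h : k = ⌊x⌋ ∨ k = ⌈x⌉) (hk : x < k) :
    k = ⌈x⌉ :=
  h.resolve_left fun hf => (hf ▸ hk).not_ge (floor_le x)

end Int

theorem largestRemainder_sub_le_sub_add_one {V α : Type*} [CommRing α] [LinearOrder α]
    [IsStrictOrderedRing α] [FloorRing α] {x : V → α} {k : V → ℤ}
    (hround : ∀ c, k c = ⌊x c⌋ ∨ k c = ⌈x c⌉)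
    (hrem : ∀ m n, (k m = ⌈x m⌉ ∧ x m ≠ ⌈x m⌉) → k n = ⌊x n⌋ → x n - ⌊x n⌋ ≤ x m - ⌊x m⌋)
    (m n : V) : x m - k m ≤ x n - k n + 1 := by
  by_contra! hgap
  have hm := abs_lt.mp (Int.abs_sub_lt_one_of_eq_floor_or_eq_ceil (hround m))
  have hn := abs_lt.mp (Int.abs_sub_lt_one_of_eq_floor_or_eq_ceil (hround n))
  have hm_floor : k m = ⌊x m⌋ :=
    Int.eq_floor_of_lt_of_eq_floor_or_eq_ceil (hround m) (by linarith)
  have hn_lt : x n < k n := by linarith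
  have hn_ceil : k n = ⌈x n⌉ := Int.eq_ceil_of_lt_of_eq_floor_or_eq_ceil (hround n) hn_lt
  have hrem_nm := hrem n m ⟨hn_ceil, hn_ceil ▸ hn_lt.ne⟩ hm_floor
  have hceil : (⌈x n⌉ : α) ≤ ⌊x n⌋ + 1 := by exact_mod_cast Int.ceil_le_floor_add_one (x n)
  rw [hm_floor, hn_ceil] at hgap
  linarith

theorem hamilton_audit_assertions_correct_general
    {V : Type*} [Fintype V] (D : ℕ) (hD : 0 < D) (p : V → ℝ)
    (q : V → ℝ) (hq : ∀ c, q c = D * p c)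
    (a' : V → ℕ)
    (ha'round : ∀ c, (a' c : ℤ) = ⌊q c⌋ ∨ (a' c : ℤ) = ⌈q c⌉)
    (ha'sum : ∑ c, a' c = D)
    (hrem : ∀ m n : V, ((a' m : ℤ) = ⌈q m⌉ ∧ q m ≠ (⌈q m⌉ : ℝ)) →
        (a' n : ℤ) = ⌊q n⌋ → q n - ⌊q n⌋ ≤ q m - ⌊q m⌋)
    (a : V → ℕ) (hasum : ∑ c, a c = D)
    (hassert : ∀ m n : V, m ≠ n →
        p m > p n + ((a m : ℝ) - (a n : ℝ) - 1) / D) :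
    a = a' := by
  by_contra hne
  obtain ⟨m, hm⟩ := Fintype.exists_lt_of_sum_eq_of_ne (ha'sum.trans hasum.symm) (Ne.symm hne)
  obtain ⟨n, hn⟩ := Fintype.exists_lt_of_sum_eq_of_ne (hasum.trans ha'sum.symm) hne
  have hmn : m ≠ n := by rintro rfl; omega
  have hm' : (a' m : ℝ) + 1 ≤ a m := by exact_mod_cast hm
  have hn' : (a n : ℝ) + 1 ≤ a' n := by exact_mod_cast hn
  have hgap : (a m : ℝ) - a n - 1 < q m - q n := by
    have h := hassert m n hmn
    rw [gt_iff_lt, ← lt_sub_iff_add_lt', div_lt_iff₀ (by exact_mod_cast hD)] at h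
    rw [hq, hq]
    linarith
  have hround := largestRemainder_sub_le_sub_add_one ha'round hrem m n
  push_cast at hround
  linarith

theorem hamilton_audit_assertions_correct
    {V : Type*} [Fintype V] (D : ℕ) (hD : 0 < D) (p : V → ℝ)
    (hp : ∀ c, 0 ≤ p c) (hsum : ∑ c, p c = 1)
    (q : V → ℝ) (hq : ∀ c, q c = D * p c)
    (a' : V → ℕ)
    (ha'round : ∀ c, (a' c : ℤ) = ⌊q c⌋ ∨ (a' c : ℤ) = ⌈q c⌉)
    (ha'sum : ∑ c, a' c = D)
    (hrem : ∀ m n : V, ((a' m : ℤ) = ⌈q m⌉ ∧ q m ≠ (⌈q m⌉ : ℝ)) →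
        (a' n : ℤ) = ⌊q n⌋ → q n - ⌊q n⌋ ≤ q m - ⌊q m⌋)
    (a : V → ℕ) (hasum : ∑ c, a c = D)
    (hassert : ∀ m n : V, m ≠ n →
        p m > p n + ((a m : ℝ) - (a n : ℝ) - 1) / D) :
    a = a' :=
  hamilton_audit_assertions_correct_general D hD p q hq a' ha'round ha'sum hrem a hasum hassert
end

section
/- For the NonViable assertion encoded as a majority assorter: assigning value 1/(2(1-τ)) to each valid ballot not for candidate c, 0 to each valid ballot for c, and 1/2 to invalid ballots, the assorter mean exceeds 1/2 iff the proportion of valid votes for c is strictly less than τ. -/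
/-!
Scaling the assorter by `2` and clearing the denominator `N = n_c + n_o + n_i`, the invalid
ballots contribute `n_i` to both sides, so the mean exceeds `1/2` iff `n_o / (1 - τ) > n_c + n_o`,
i.e. iff `n_c < τ (n_c + n_o)`.
-/

section

variable {K : Type*} [Field K] [LinearOrder K] [IsStrictOrderedRing K]

theorem half_lt_assorter_mean_iff {t c o i : K} (hpos : 0 < c + o + i) :
    1 / 2 < (o * (1 / (2 * (1 - t))) + c * 0 + i * (1 / 2)) / (c + o + i) ↔
      c + o < o / (1 - t) := by
  have hscale : o * (1 / (2 * (1 - t))) = o / (1 - t) / 2 := by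
    rw [mul_one_div, div_mul_eq_div_div_swap]
  rw [lt_div_iff₀ hpos, hscale]
  constructor <;> intro h <;> linarith

theorem add_lt_div_one_sub_iff_div_add_lt {t c o : K} (ht : t < 1) (hvalid : 0 < c + o) :
    c + o < o / (1 - t) ↔ c / (c + o) < t := by
  rw [lt_div_iff₀ (sub_pos.mpr ht), div_lt_iff₀ hvalid]
  constructor <;> intro h <;> linarith

end

theorem nonviable_assorter_mean_gt_half_iff_general
    (τ : ℝ) (hτ₂ : τ < 1)
    (nc no ni N : ℕ) (hN : N = nc + no + ni) (hNpos : 0 < N)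
    (hvalid : 0 < nc + no)
    (mean : ℝ)
    (hmean : mean = ((no : ℝ) * (1 / (2 * (1 - τ))) + (nc : ℝ) * 0
        + (ni : ℝ) * (1 / 2)) / N) :
    mean > 1 / 2 ↔ (nc : ℝ) / ((nc : ℝ) + (no : ℝ)) < τ := by
  subst hN hmean
  have hpos : (0 : ℝ) < nc + no + ni := by exact_mod_cast hNpos
  have hvalid' : (0 : ℝ) < nc + no := by exact_mod_cast hvalid
  push_cast
  rw [gt_iff_lt, half_lt_assorter_mean_iff hpos,
    add_lt_div_one_sub_iff_div_add_lt hτ₂ hvalid']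

theorem nonviable_assorter_mean_gt_half_iff
    (τ : ℝ) (hτ₁ : 0 < τ) (hτ₂ : τ < 1)
    (nc no ni N : ℕ) (hN : N = nc + no + ni) (hNpos : 0 < N)
    (hvalid : 0 < nc + no)
    (mean : ℝ)
    (hmean : mean = ((no : ℝ) * (1 / (2 * (1 - τ))) + (nc : ℝ) * 0
        + (ni : ℝ) * (1 / 2)) / N) :
    mean > 1 / 2 ↔ (nc : ℝ) / ((nc : ℝ) + (no : ℝ)) < τ :=
  nonviable_assorter_mean_gt_half_iff_general τ hτ₂ nc no ni N hN hNpos hvalid mean hmean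
end
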